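/- arXiv:2006.11660 — 3 statements merged into one kernel-verified Lean document; each statement's English description precedes it below -/
import Mathlib

section
/- If G satisfies the property that any two vanishing elements lying in distinct conjugacy classes have coprime orders, then for any normal subgroup N of G, the quotient G/N also satisfies this property. -/
/-!
Inflation along `G → G ⧸ N` keeps irreducible characters irreducible: restriction along a
surjection is fully faithful, so the endomorphism space of the inflated representation is
still one-dimensional. Hence any preimages of vanishing elements of `G ⧸ N` are vanishing in `G`,
they are not conjugate when their images are not, and their orders are multiples of the orders
of the images.
-/

open CategoryTheory

/-- An element `g` of a group is a *vanishing element* if some irreducible complex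
character vanishes at `g`. -/
def IsVanishing {G : Type} [Group G] (g : G) : Prop :=
  ∃ V : FDRep ℂ G, Simple V ∧ V.character g = 0

namespace FDRep

variable {k G H : Type} [Field k] [IsAlgClosed k] [Group G] [Group H] [Finite G] [Finite H]
  [NeZero (Nat.card G : k)] [NeZero (Nat.card H : k)]

theorem simple_res_of_surjective {f : G →* H} (hf : Function.Surjective f) (V : FDRep k H)
    [Simple V] : Simple ((Action.res (FGModuleCat k) f).obj V) := by
  have : (Action.res (FGModuleCat k) f).Full := Action.full_res _ f hf
  let e : (V ⟶ V) ≃ₗ[k] ((Action.res (FGModuleCat k) f).obj V ⟶ _) :=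
    .ofBijective ((Action.res (FGModuleCat k) f).mapLinearMap k)
      ⟨(Action.res (FGModuleCat k) f).map_injective, (Action.res (FGModuleCat k) f).map_surjective⟩
  rw [simple_iff_end_is_rank_one, ← e.finrank_eq, ← simple_iff_end_is_rank_one]
  infer_instance

end FDRep

theorem IsVanishing.of_map {G H : Type} [Group G] [Group H] [Finite G] {f : G →* H}
    (hf : Function.Surjective f) {g : G} (hg : IsVanishing (f g)) : IsVanishing g := by
  have : Finite H := Finite.of_surjective f hf
  obtain ⟨V, hV, hχ⟩ := hg
  exact ⟨(Action.res (FGModuleCat ℂ) f).obj V, FDRep.simple_res_of_surjective hf V, hχ⟩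

/-- Property (⋆) passes to quotients. -/
theorem stmt2 (G : Type) [Group G] [Fintype G] (N : Subgroup G) [N.Normal]
    (hG : ∀ x y : G, IsVanishing x → IsVanishing y → ¬ IsConj x y →
      Nat.gcd (orderOf x) (orderOf y) = 1) :
    ∀ x y : G ⧸ N, IsVanishing x → IsVanishing y → ¬ IsConj x y →
      Nat.gcd (orderOf x) (orderOf y) = 1 := by
  intro x y hx hy hxy
  obtain ⟨g, rfl⟩ := QuotientGroup.mk_surjective x
  obtain ⟨h, rfl⟩ := QuotientGroup.mk_surjective y
  have hπ : Function.Surjective (QuotientGroup.mk' N) := QuotientGroup.mk'_surjective N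
  have hcoprime : (orderOf g).Coprime (orderOf h) :=
    hG g h (hx.of_map hπ) (hy.of_map hπ)
      fun hc => hxy ((QuotientGroup.mk' N).map_isConj hc)
  exact (hcoprime.coprime_dvd_left (orderOf_map_dvd (QuotientGroup.mk' N) g)).coprime_dvd_right
    (orderOf_map_dvd (QuotientGroup.mk' N) h)
end

section
/- Let G be a finite solvable group and N a normal subgroup such that G \ N is a single conjugacy class of G. Then G is a Frobenius group with abelian kernel N and complement of order 2; in particular |G:N| = 2 and N is abelian. -/
/-- If `G` is a finite solvable group and `N ⊴ G` with `G \ N` a single conjugacy class,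
then `G` is a Frobenius group with abelian kernel `N` and complement of order `2`. -/
theorem stmt12 (G : Type*) [Group G] [Fintype G] (N : Subgroup G) [N.Normal]
    (hsolv : IsSolvable G)
    (hne : ∃ x : G, x ∉ N)
    (hclass : ∀ x y : G, x ∉ N → y ∉ N → IsConj x y) :
    N.index = 2 ∧ (∀ a ∈ N, ∀ b ∈ N, a * b = b * a) ∧
      (∀ g : G, g ∉ N → ∀ n ∈ N, g * n * g⁻¹ = n → n = 1) := by
  classical
  obtain ⟨x₀, hx₀⟩ := hne
  -- Key: for every g ∉ N, the centralizer of g has exactly 2 elements, and N has index 2.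
  have hkey : ∀ g : G, g ∉ N →
      Fintype.card (Subgroup.centralizer {g}) = 2 ∧ N.index = 2 := by
    intro g hg
    have hg1 : g ≠ 1 := fun h => hg (h ▸ N.one_mem)
    -- the conjugacy class of g is exactly the complement of N
    have horb : (MulAction.orbit (ConjAct G) g) = ((N : Set G))ᶜ := by
      ext y
      simp only [ConjAct.mem_orbit_conjAct, Set.mem_compl_iff, SetLike.mem_coe]
      constructor
      · rintro ⟨c, hc⟩ hy
        apply hg
        have hmem := (‹N.Normal› : N.Normal).conj_mem y hy (c : G)
        have h : (c : G) * y * (c : G)⁻¹ = g := mul_inv_eq_iff_eq_mul.mpr hc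
        exact h ▸ hmem
      · intro hy
        exact hclass y g hy hg
    have horbcard : Fintype.card (MulAction.orbit (ConjAct G) g) =
        Fintype.card ((N : Set G)ᶜ : Set G) :=
      Fintype.card_congr (Equiv.setCongr horb)
    have hstab : Fintype.card (MulAction.stabilizer (ConjAct G) g) =
        Fintype.card (Subgroup.centralizer {g}) := by
      have := Subgroup.nat_card_centralizer_nat_card_stabilizer g
      simpa [Nat.card_eq_fintype_card] using this.symm
    have hos := MulAction.card_orbit_mul_card_stabilizer_eq_card_group (ConjAct G) g
    rw [horbcard, hstab] at hos
    have hGconj : Fintype.card (ConjAct G) = Fintype.card G := rfl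
    rw [hGconj] at hos
    -- set up the arithmetic
    set n := Fintype.card N with hn
    set m := Fintype.card ((N : Set G)ᶜ : Set G) with hm
    set c := Fintype.card (Subgroup.centralizer {g}) with hc
    set k := N.index with hk
    have hNcard : Fintype.card ((N : Set G) : Set G) = n := by
      exact Fintype.card_congr (Equiv.setCongr rfl)
    have hcompl : m + n = Fintype.card G := by
      have h1 : m = Fintype.card G - Fintype.card ((N : Set G) : Set G) :=
        Fintype.card_compl_set _
      have h2 : Fintype.card ((N : Set G) : Set G) ≤ Fintype.card G :=
        Fintype.card_subtype_le _
      rw [hNcard] at h1 h2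
      omega
    have hindex : k * n = Fintype.card G := by
      have := Subgroup.index_mul_card N
      simpa [Nat.card_eq_fintype_card] using this
    have hcpos : 2 ≤ c := by
      rw [hc]
      refine Fintype.one_lt_card_iff.mpr ⟨⟨1, Subgroup.one_mem _⟩,
        ⟨g, Subgroup.mem_centralizer_singleton_iff.mpr rfl⟩, ?_⟩
      simp [Subtype.ext_iff, Ne.symm hg1]
    have hkpos : 2 ≤ k := by
      have h0 : k ≠ 0 := Subgroup.index_ne_zero_of_finite
      have h1 : k ≠ 1 := by
        intro h
        exact hg ((Subgroup.index_eq_one.mp h) ▸ Subgroup.mem_top g)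
      omega
    have hnpos : 1 ≤ n := Fintype.card_pos
    -- derive m = n
    have h2m : 2 * m ≤ m * c := by
      calc 2 * m = m * 2 := by ring
      _ ≤ m * c := Nat.mul_le_mul_left m hcpos
    have h2n : 2 * n ≤ k * n := Nat.mul_le_mul_right n hkpos
    have hmn : m = n := by omega
    have hceq : c = 2 := by
      have : m * c = m * 2 := by omega
      exact Nat.eq_of_mul_eq_mul_left (by omega) this
    have hkeq : k = 2 := by
      have : k * n = 2 * n := by omega
      exact Nat.eq_of_mul_eq_mul_right (by omega) this
    exact ⟨hceq, hkeq⟩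
  -- fixed-point freeness
  have hfpf : ∀ g : G, g ∉ N → ∀ n ∈ N, g * n * g⁻¹ = n → n = 1 := by
    intro g hg a ha hfix
    obtain ⟨hcard, -⟩ := hkey g hg
    have hg1 : g ≠ 1 := fun h => hg (h ▸ N.one_mem)
    have haC : a ∈ Subgroup.centralizer {g} := by
      rw [Subgroup.mem_centralizer_singleton_iff]
      exact (mul_inv_eq_iff_eq_mul.mp hfix).symm
    by_contra ha1
    have hag : a ≠ g := fun h => hg (h ▸ ha)
    have : 2 < Fintype.card (Subgroup.centralizer {g}) := by
      rw [Fintype.two_lt_card_iff]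
      exact ⟨⟨1, Subgroup.one_mem _⟩,
        ⟨g, Subgroup.mem_centralizer_singleton_iff.mpr rfl⟩, ⟨a, haC⟩,
        by simp [Subtype.ext_iff, Ne.symm hg1],
        by simp [Subtype.ext_iff, Ne.symm ha1],
        by simp [Subtype.ext_iff, Ne.symm hag]⟩
    omega
  -- every element outside N has order 2
  have hsq : ∀ g : G, g ∉ N → g * g = 1 := by
    intro g hg
    obtain ⟨hcard, -⟩ := hkey g hg
    have hg1 : g ≠ 1 := fun h => hg (h ▸ N.one_mem)
    have hgC : g ∈ Subgroup.centralizer {g} :=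
      Subgroup.mem_centralizer_singleton_iff.mpr rfl
    have hdvd : orderOf (⟨g, hgC⟩ : Subgroup.centralizer {g}) ∣ 2 := by
      rw [← hcard]
      exact orderOf_dvd_card
    have : (⟨g, hgC⟩ : Subgroup.centralizer {g}) ^ 2 = 1 :=
      orderOf_dvd_iff_pow_eq_one.mp hdvd
    have : g ^ 2 = 1 := by
      simpa [Subtype.ext_iff] using congrArg (Subtype.val) this
    rw [pow_two] at this
    exact this
  -- conjugation by x₀ inverts N
  have hinv : ∀ a ∈ N, x₀ * a * x₀⁻¹ = a⁻¹ := by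
    intro a ha
    have hxa : x₀ * a ∉ N := by
      intro h
      exact hx₀ (by simpa using N.mul_mem h (N.inv_mem ha))
    have h1 := hsq _ hxa
    have h2 := hsq x₀ hx₀
    -- x₀ * a * x₀ * a = 1 and x₀ * x₀ = 1
    have hxinv : x₀⁻¹ = x₀ := by
      rw [inv_eq_iff_mul_eq_one]; exact h2
    rw [hxinv]
    have : x₀ * a * x₀ = a⁻¹ := by
      rw [← mul_assoc] at h1
      have := mul_eq_one_iff_eq_inv.mp h1
      simpa using this
    exact this
  refine ⟨(hkey x₀ hx₀).2, ?_, hfpf⟩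
  intro a ha b hb
  have h1 := hinv _ (N.mul_mem ha hb)
  have h2 : x₀ * (a * b) * x₀⁻¹ = a⁻¹ * b⁻¹ := by
    rw [show x₀ * (a * b) * x₀⁻¹ = (x₀ * a * x₀⁻¹) * (x₀ * b * x₀⁻¹) by group,
      hinv a ha, hinv b hb]
  have h3 : (a * b)⁻¹ = a⁻¹ * b⁻¹ := by rw [← h1, h2]
  rw [mul_inv_rev] at h3
  have := congrArg (fun z => z⁻¹) h3
  simpa [mul_inv_rev] using this
end

section
/- Let G be a finite non-abelian group that is a Frobenius group with abelian kernel K of odd order and complement of order 2. Then the set of vanishing elements of G is exactly G \ K, which forms a single conjugacy class consisting of involutions. -/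
/-!
Every `g ∉ K` inverts its square, which lies in `K` and has odd order, so `g² = 1`; two such
`g, h` are conjugate by a square root of `g h⁻¹ ∈ K`.

For `g ∈ K` and `V` irreducible, `ρ g + ρ g⁻¹` commutes with `ρ G` since `{g, g⁻¹}` is closed
under conjugation, so it is a scalar `c` by Schur's lemma. As `g` is conjugate to `g⁻¹`,
`χ g = 0` forces `c = 0`, i.e. `ρ g ^ 2 = -1`, impossible as `g` has odd order.

For `g ∉ K`, take a character `λ` of `K` with `λ² ≠ 1`; it exists because `K` is abelian of odd
order and nontrivial (otherwise `|G| = 2`). The representation induced from `λ` has character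
`λ n + λ n⁻¹` at `n ∈ K` and `0` off `K`, and it is irreducible because its character has norm
`(2 |K| + ∑ λ² + ∑ λ⁻²) / |G| = 1`.
-/

open CategoryTheory

open Module

namespace FDRep
variable {k G : Type} [Field k]

section Monoid
variable [Monoid G]

lemma nontrivial_of_simple (V : FDRep k G) [Simple V] : Nontrivial V := by
  by_contra h
  rw [not_nontrivial_iff_subsingleton] at h
  apply id_nonzero V
  ext v
  exact Subsingleton.elim _ _

lemma exists_eq_smul_one_of_commute [IsAlgClosed k] (V : FDRep k G) [Simple V]
    (f : V →ₗ[k] V) (hf : ∀ g, f * V.ρ g = V.ρ g * f) : ∃ c : k, f = c • 1 := by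
  let φ : V ⟶ V := ⟨InducedCategory.homMk (ModuleCat.ofHom f), fun g => by
    ext x; exact LinearMap.congr_fun (hf g) x⟩
  obtain ⟨c, hc⟩ := endomorphism_simple_eq_smul_id k φ
  exact ⟨c, congrArg (fun ψ : V ⟶ V => ψ.hom.hom.hom) hc.symm⟩

end Monoid

variable [Group G]

lemma ρ_mul_eq_ρ_conj_mul (V : FDRep k G) (h x : G) :
    V.ρ h * V.ρ x = V.ρ (h * x * h⁻¹) * V.ρ h := by
  rw [← map_mul, ← map_mul, inv_mul_cancel_right]

lemma character_ne_zero_of_odd_orderOf [IsAlgClosed k] [CharZero k] (V : FDRep k G) [Simple V]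
    {g t : G} (hconj : ∀ h : G, h * g * h⁻¹ = g ∨ h * g * h⁻¹ = g⁻¹)
    (ht : t * g * t⁻¹ = g⁻¹) (hodd : Odd (orderOf g)) : V.character g ≠ 0 := by
  intro hχ
  have := V.nontrivial_of_simple
  have hdim : (finrank k V : k) ≠ 0 := Nat.cast_ne_zero.mpr finrank_pos.ne'
  obtain ⟨c, hc⟩ := V.exists_eq_smul_one_of_commute (V.ρ g + V.ρ g⁻¹) fun h => by
    have hinv : h * g⁻¹ * h⁻¹ = (h * g * h⁻¹)⁻¹ := by group
    symm
    rw [mul_add, ρ_mul_eq_ρ_conj_mul V h g, ρ_mul_eq_ρ_conj_mul V h g⁻¹, hinv, ← add_mul]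
    rcases hconj h with h' | h' <;> rw [h']
    rw [inv_inv, add_comm]
  have hχinv : V.character g⁻¹ = 0 := by rw [← ht, char_conj, hχ]
  have hc0 : c = 0 := by
    have := congrArg (LinearMap.trace k V) hc
    rw [map_add, map_smul, LinearMap.trace_one, smul_eq_mul] at this
    change V.character g + V.character g⁻¹ = _ at this
    rw [hχ, hχinv, zero_add, eq_comm, mul_eq_zero] at this
    exact this.resolve_right hdim
  have hsq : V.ρ g ^ 2 = -1 := by
    rw [hc0, zero_smul, add_eq_zero_iff_neg_eq] at hc
    rw [sq, ← neg_eq_iff_eq_neg, ← mul_neg, hc, ← map_mul, mul_inv_cancel, map_one]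
  have : (-1 : V →ₗ[k] V) = 1 := by
    rw [← hodd.neg_one_pow, ← hsq, ← pow_mul, mul_comm, pow_mul, ← map_pow, pow_orderOf_eq_one,
      map_one, one_pow]
  have := congrArg (LinearMap.trace k V) this
  rw [map_neg, LinearMap.trace_one, eq_comm, self_eq_neg] at this
  exact hdim this

end FDRep

section MonomialMatrices
variable {R : Type*} [CommRing R]

def diagInv (u : Rˣ) : Matrix (Fin 2) (Fin 2) R := !![(u : R), 0; 0, ↑u⁻¹]

def antidiagInv (u : Rˣ) : Matrix (Fin 2) (Fin 2) R := !![0, (u : R); ↑u⁻¹, 0]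

lemma diagInv_one : diagInv (1 : Rˣ) = 1 := by
  simp [diagInv, Matrix.one_fin_two]

lemma diagInv_mul_diagInv (u v : Rˣ) : diagInv u * diagInv v = diagInv (u * v) := by
  simp [diagInv, mul_comm]

lemma diagInv_mul_antidiagInv (u v : Rˣ) :
    diagInv u * antidiagInv v = antidiagInv (u * v) := by
  simp [diagInv, antidiagInv, mul_comm]

lemma antidiagInv_mul_diagInv (u v : Rˣ) :
    antidiagInv u * diagInv v = antidiagInv (u * v⁻¹) := by
  simp [diagInv, antidiagInv, mul_comm]

lemma antidiagInv_mul_antidiagInv (u v : Rˣ) :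
    antidiagInv u * antidiagInv v = diagInv (u * v⁻¹) := by
  simp [diagInv, antidiagInv, mul_comm]

lemma trace_diagInv (u : Rˣ) : (diagInv u).trace = u + ↑u⁻¹ := by
  simp [diagInv, Matrix.trace_fin_two]

lemma trace_antidiagInv (u : Rˣ) : (antidiagInv u).trace = 0 := by
  simp [antidiagInv, Matrix.trace_fin_two]

end MonomialMatrices

lemma Subgroup.mul_mem_of_index_eq_two {G : Type*} [Group G] {K : Subgroup G} (hK : K.index = 2)
    {x y : G} (hx : x ∉ K) (hy : y ∉ K) : x * y ∈ K :=
  (Subgroup.mul_mem_iff_of_index_two hK).mpr (iff_of_false hx hy)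

section InducedRepresentation
variable {G : Type} [Group G] {K : Subgroup G} {t : G} {R : Type*} [CommRing R]

open scoped Classical in
/-- The representation induced from `χ`, in the basis `e, t • e` where `n • e = χ n • e`. -/
noncomputable def inducedMatrix (hK : K.index = 2) (ht : t ∉ K) (χ : K →* Rˣ) (x : G) :
    Matrix (Fin 2) (Fin 2) R :=
  if hx : x ∈ K then diagInv (χ ⟨x, hx⟩)
  else antidiagInv (χ ⟨x * t, K.mul_mem_of_index_eq_two hK hx ht⟩)

variable (hK : K.index = 2) (ht : t ∉ K) (χ : K →* Rˣ)

lemma inducedMatrix_of_mem {x : G} (hx : x ∈ K) :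
    inducedMatrix hK ht χ x = diagInv (χ ⟨x, hx⟩) :=
  dif_pos hx

lemma inducedMatrix_of_notMem {x : G} (hx : x ∉ K) :
    inducedMatrix hK ht χ x = antidiagInv (χ ⟨x * t, K.mul_mem_of_index_eq_two hK hx ht⟩) :=
  dif_neg hx

lemma inducedMatrix_mul (htt : t * t = 1) (hinv : ∀ n ∈ K, t * n * t⁻¹ = n⁻¹) (x y : G) :
    inducedMatrix hK ht χ (x * y) = inducedMatrix hK ht χ x * inducedMatrix hK ht χ y := by
  have htinv : t⁻¹ = t := inv_eq_of_mul_eq_one_right htt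
  by_cases hx : x ∈ K <;> by_cases hy : y ∈ K
  · rw [inducedMatrix_of_mem hK ht χ hx, inducedMatrix_of_mem hK ht χ hy,
      inducedMatrix_of_mem hK ht χ (K.mul_mem hx hy), diagInv_mul_diagInv, ← map_mul]
    rfl
  · have hxy : x * y ∉ K := mt (K.mul_mem_cancel_left hx).mp hy
    rw [inducedMatrix_of_mem hK ht χ hx, inducedMatrix_of_notMem hK ht χ hy,
      inducedMatrix_of_notMem hK ht χ hxy, diagInv_mul_antidiagInv, ← map_mul]
    exact congrArg (antidiagInv ∘ χ) (Subtype.ext (mul_assoc x y t))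
  · have hxy : x * y ∉ K := mt (K.mul_mem_cancel_right hy).mp hx
    rw [inducedMatrix_of_notMem hK ht χ hx, inducedMatrix_of_mem hK ht χ hy,
      inducedMatrix_of_notMem hK ht χ hxy, antidiagInv_mul_diagInv, ← map_inv, ← map_mul]
    refine congrArg (antidiagInv ∘ χ) (Subtype.ext ?_)
    calc x * y * t = x * t * (t⁻¹ * y * t) := by group
      _ = x * t * (t * y * t⁻¹) := by rw [htinv]
      _ = x * t * y⁻¹ := by rw [hinv y hy]
  · have hyt := K.mul_mem_of_index_eq_two hK hy ht
    rw [inducedMatrix_of_notMem hK ht χ hx, inducedMatrix_of_notMem hK ht χ hy,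
      inducedMatrix_of_mem hK ht χ (K.mul_mem_of_index_eq_two hK hx hy),
      antidiagInv_mul_antidiagInv, ← map_inv, ← map_mul]
    refine congrArg (diagInv ∘ χ) (Subtype.ext ?_)
    calc x * y = x * (t * t) * y := by rw [htt, mul_one]
      _ = x * t * (t * (y * t) * t⁻¹) := by group
      _ = x * t * (y * t)⁻¹ := by rw [hinv _ hyt]

lemma inducedMatrix_one : inducedMatrix hK ht χ 1 = 1 := by
  rw [inducedMatrix_of_mem hK ht χ K.one_mem]
  exact (congrArg diagInv χ.map_one).trans diagInv_one

noncomputable def inducedMatrixHom (htt : t * t = 1) (hinv : ∀ n ∈ K, t * n * t⁻¹ = n⁻¹) :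
    G →* Matrix (Fin 2) (Fin 2) R where
  toFun := inducedMatrix hK ht χ
  map_one' := inducedMatrix_one hK ht χ
  map_mul' := inducedMatrix_mul hK ht χ htt hinv

end InducedRepresentation

section InducedFDRep
variable {G : Type} [Group G] {K : Subgroup G} {t : G} {k : Type} [Field k]
  (hK : K.index = 2) (ht : t ∉ K) (χ : K →* kˣ)
  (htt : t * t = 1) (hinv : ∀ n ∈ K, t * n * t⁻¹ = n⁻¹)

noncomputable def inducedRep : FDRep k G :=
  FDRep.of ((Matrix.toLinAlgEquiv' : Matrix (Fin 2) (Fin 2) k ≃ₐ[k] _).toMonoidHom.comp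
    (inducedMatrixHom hK ht χ htt hinv))

lemma inducedRep_character (x : G) :
    (inducedRep hK ht χ htt hinv).character x = (inducedMatrix hK ht χ x).trace :=
  Matrix.trace_toLin'_eq _

lemma inducedRep_character_of_mem (n : K) :
    (inducedRep hK ht χ htt hinv).character n = χ n + ↑(χ n)⁻¹ := by
  rw [inducedRep_character, inducedMatrix_of_mem hK ht χ n.2, trace_diagInv]

lemma inducedRep_character_of_notMem {x : G} (hx : x ∉ K) :
    (inducedRep hK ht χ htt hinv).character x = 0 := by
  rw [inducedRep_character, inducedMatrix_of_notMem hK ht χ hx, trace_antidiagInv]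

end InducedFDRep

lemma sum_val_units_hom_eq_zero {A R : Type*} [Group A] [Fintype A] [CommRing R] [IsDomain R]
    {ψ : A →* Rˣ} (hψ : ψ ≠ 1) : ∑ a, (ψ a : R) = 0 :=
  sum_hom_units_eq_zero ((Units.coeHom R).comp ψ) fun h => hψ <| MonoidHom.ext fun a =>
    Units.ext (DFunLike.congr_fun h a)

lemma simple_inducedRep {G : Type} [Group G] [Fintype G] {K : Subgroup G} {t : G}
    (hK : K.index = 2) (ht : t ∉ K) (χ : K →* ℂˣ) (htt : t * t = 1)
    (hinv : ∀ n ∈ K, t * n * t⁻¹ = n⁻¹) (hχ : χ ^ 2 ≠ 1) :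
    Simple (inducedRep hK ht χ htt hinv) := by
  classical
  rw [FDRep.simple_iff_char_is_norm_one]
  set V := inducedRep hK ht χ htt hinv
  have hterm (n : K) : V.character n * V.character (n : G)⁻¹ =
      ((χ ^ 2) n : ℂ) + 2 + ((χ ^ 2)⁻¹ n : ℂ) := by
    rw [← K.coe_inv, inducedRep_character_of_mem, inducedRep_character_of_mem, map_inv, inv_inv,
      MonoidHom.inv_apply, MonoidHom.pow_apply]
    push_cast [Units.val_pow_eq_pow_val]
    linear_combination (2 : ℂ) * mul_inv_cancel₀ (χ n).ne_zero
  have hout : ∑ x : {x // x ∉ K}, V.character x * V.character (x : G)⁻¹ = 0 :=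
    Finset.sum_eq_zero fun x _ => by
      rw [inducedRep_character_of_notMem hK ht χ htt hinv x.2, zero_mul]
  have hin : ∑ n : K, V.character n * V.character (n : G)⁻¹ = 2 * Nat.card K := by
    have hχ' : (χ ^ 2)⁻¹ ≠ 1 := inv_ne_one (α := K →* ℂˣ) |>.mpr hχ
    rw [Fintype.sum_congr _ _ hterm, Finset.sum_add_distrib, Finset.sum_add_distrib,
      sum_val_units_hom_eq_zero hχ, sum_val_units_hom_eq_zero hχ']
    simp [mul_comm]
  rw [← Fintype.sum_subtype_add_sum_subtype (· ∈ K), hin, hout, ← K.card_mul_index, hK]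
  push_cast
  ring

lemma eq_one_of_sq_eq_one_of_odd_orderOf {G : Type*} [Monoid G] {x : G}
    (hodd : Odd (orderOf x)) (h : x ^ 2 = 1) : x = 1 :=
  orderOf_eq_one_iff.mp <|
    (Nat.coprime_two_right.mpr hodd).eq_one_of_dvd (orderOf_dvd_of_pow_eq_one h)

lemma exists_pow_sq_eq_of_odd_orderOf {G : Type*} [Monoid G] {x : G} (hodd : Odd (orderOf x)) :
    ∃ m : ℕ, (x ^ m) ^ 2 = x := by
  obtain ⟨j, hj⟩ := hodd
  refine ⟨j + 1, ?_⟩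
  rw [← pow_mul, show (j + 1) * 2 = orderOf x + 1 by omega, pow_succ, pow_orderOf_eq_one, one_mul]

lemma isConj_sq_inv_mul_of_conj_eq_inv {G : Type*} [Group G] {g m : G}
    (h : g * m * g⁻¹ = m⁻¹) : IsConj g ((m ^ 2)⁻¹ * g) :=
  isConj_iff.mpr ⟨m⁻¹, calc
    m⁻¹ * g * m⁻¹⁻¹ = m⁻¹ * (g * m * g⁻¹) * g := by group
    _ = (m ^ 2)⁻¹ * g := by rw [h]; group⟩

lemma exists_monoidHom_units_sq_ne_one {A : Type*} [CommGroup A] [Finite A]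
    (hodd : Odd (Nat.card A)) {a : A} (ha : a ≠ 1) : ∃ χ : A →* ℂˣ, χ ^ 2 ≠ 1 := by
  have ha2 : a ^ 2 ≠ 1 := fun h =>
    ha (eq_one_of_sq_eq_one_of_odd_orderOf (hodd.of_dvd_nat (orderOf_dvd_natCard a)) h)
  have : NeZero (Monoid.exponent A : ℂ) := ⟨Nat.cast_ne_zero.mpr Monoid.exponent_ne_zero_of_finite⟩
  obtain ⟨χ, hχ⟩ := CommGroup.exists_apply_ne_one_of_hasEnoughRootsOfUnity A ℂ ha2
  exact ⟨χ, fun h => hχ (by rw [map_pow, ← MonoidHom.pow_apply, h, MonoidHom.one_apply])⟩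

section IndexTwoInverting
variable {G : Type} [Group G] {K : Subgroup G}

lemma sq_eq_one_of_notMem (hoddK : Odd (Nat.card K)) (hindex : K.index = 2)
    (hinv : ∀ g : G, g ∉ K → ∀ n ∈ K, g * n * g⁻¹ = n⁻¹) {g : G} (hg : g ∉ K) : g ^ 2 = 1 := by
  have hsq : g ^ 2 ∈ K := sq g ▸ K.mul_self_mem_of_index_two hindex g
  have h := hinv g hg _ hsq
  rw [show g * g ^ 2 * g⁻¹ = g ^ 2 by group] at h
  refine eq_one_of_sq_eq_one_of_odd_orderOf (hoddK.of_dvd_nat (K.orderOf_dvd_natCard hsq)) ?_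
  calc (g ^ 2) ^ 2 = g ^ 2 * g ^ 2 := sq _
    _ = (g ^ 2)⁻¹ * g ^ 2 := by rw [← h]
    _ = 1 := inv_mul_cancel _

lemma isConj_of_notMem (hoddK : Odd (Nat.card K)) (hindex : K.index = 2)
    (hinv : ∀ g : G, g ∉ K → ∀ n ∈ K, g * n * g⁻¹ = n⁻¹) {g h : G} (hg : g ∉ K) (hh : h ∉ K) :
    IsConj g h := by
  have hgh : g * h⁻¹ ∈ K := K.mul_mem_of_index_eq_two hindex hg (mt K.inv_mem_iff.mp hh)
  obtain ⟨m, hm⟩ := exists_pow_sq_eq_of_odd_orderOf (hoddK.of_dvd_nat (K.orderOf_dvd_natCard hgh))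
  have := isConj_sq_inv_mul_of_conj_eq_inv (hinv g hg _ (K.pow_mem hgh m))
  rwa [hm, mul_inv_rev, inv_inv, inv_mul_cancel_right] at this

lemma character_ne_zero_of_mem (V : FDRep ℂ G) [Simple V]
    (hab : ∀ a ∈ K, ∀ b ∈ K, a * b = b * a) (hoddK : Odd (Nat.card K)) (hindex : K.index = 2)
    (hinv : ∀ g : G, g ∉ K → ∀ n ∈ K, g * n * g⁻¹ = n⁻¹) {g : G} (hg : g ∈ K) :
    V.character g ≠ 0 := by
  have hK : K ≠ ⊤ := mt Subgroup.index_eq_one.mpr (by rw [hindex]; decide)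
  obtain ⟨t, -, ht⟩ := SetLike.exists_of_lt (lt_top_iff_ne_top.mpr hK)
  refine V.character_ne_zero_of_odd_orderOf (fun h => ?_) (hinv t ht g hg)
    (hoddK.of_dvd_nat (K.orderOf_dvd_natCard hg))
  by_cases hh : h ∈ K
  · exact Or.inl (by rw [hab h hh g hg, mul_inv_cancel_right])
  · exact Or.inr (hinv h hh g hg)

open scoped IsMulCommutative in
lemma isVanishing_of_notMem [Fintype G] (hG : ¬ ∀ a b : G, a * b = b * a)
    (hab : ∀ a ∈ K, ∀ b ∈ K, a * b = b * a) (hoddK : Odd (Nat.card K)) (hindex : K.index = 2)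
    (hinv : ∀ g : G, g ∉ K → ∀ n ∈ K, g * n * g⁻¹ = n⁻¹) {g : G} (hg : g ∉ K) :
    IsVanishing g := by
  have hK : K ≠ ⊥ := by
    rintro rfl
    rw [Subgroup.index_bot] at hindex
    have := isCyclic_of_prime_card hindex
    exact hG IsCyclic.commGroup.mul_comm
  obtain ⟨a, ha⟩ := Subgroup.ne_bot_iff_exists_ne_one.mp hK
  have : IsMulCommutative K := ⟨⟨fun a b => Subtype.ext (hab _ a.2 _ b.2)⟩⟩
  obtain ⟨χ, hχ⟩ := exists_monoidHom_units_sq_ne_one hoddK ha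
  have hgg : g * g = 1 := by rw [← sq, sq_eq_one_of_notMem hoddK hindex hinv hg]
  exact ⟨inducedRep hindex hg χ hgg (hinv g hg), simple_inducedRep hindex hg χ hgg (hinv g hg) hχ,
    inducedRep_character_of_notMem hindex hg χ hgg (hinv g hg) hg⟩

end IndexTwoInverting

theorem stmt13_general (G : Type) [Group G] [Fintype G]
    (hG : ¬ ∀ a b : G, a * b = b * a)
    (K : Subgroup G)
    (hab : ∀ a ∈ K, ∀ b ∈ K, a * b = b * a)
    (hoddK : Odd (Nat.card K)) (hindex : K.index = 2)
    (hinv : ∀ g : G, g ∉ K → ∀ n ∈ K, g * n * g⁻¹ = n⁻¹) :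
    (∀ g : G, IsVanishing g ↔ g ∉ K) ∧
      (∀ g : G, g ∉ K → orderOf g = 2) ∧
      (∀ g h : G, g ∉ K → h ∉ K → IsConj g h) := by
  refine ⟨fun g => ⟨?_, isVanishing_of_notMem hG hab hoddK hindex hinv⟩, fun g hg => ?_,
    fun g h hg hh => isConj_of_notMem hoddK hindex hinv hg hh⟩
  · rintro ⟨V, _, hχ⟩ hg
    exact character_ne_zero_of_mem V hab hoddK hindex hinv hg hχ
  · exact orderOf_eq_prime (sq_eq_one_of_notMem hoddK hindex hinv hg) fun h => hg (h ▸ K.one_mem)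

/-- In a Frobenius group with abelian odd-order kernel `K` and complement of order 2
(elements outside `K` invert `K`), the vanishing elements are exactly the elements of
`G \ K`, which form a single conjugacy class of involutions. -/
theorem stmt13 (G : Type) [Group G] [Fintype G]
    (hG : ¬ ∀ a b : G, a * b = b * a)
    (K : Subgroup G) [K.Normal]
    (hab : ∀ a ∈ K, ∀ b ∈ K, a * b = b * a)
    (hoddK : Odd (Nat.card K)) (hindex : K.index = 2)
    (hinv : ∀ g : G, g ∉ K → ∀ n ∈ K, g * n * g⁻¹ = n⁻¹) :
    (∀ g : G, IsVanishing g ↔ g ∉ K) ∧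
      (∀ g : G, g ∉ K → orderOf g = 2) ∧
      (∀ g h : G, g ∉ K → h ∉ K → IsConj g h) :=
  stmt13_general G hG K hab hoddK hindex hinv
end
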